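/- arXiv:math/0612771 — 3 statements merged into one kernel-verified Lean document; each statement's English description precedes it below -/
import Mathlib

section
/- With the reflective/coreflective setup and Conditions (i) and (ii), the composite functors ι ⋙ F : D ⥤ E (sending x to F(ι x)) and κ ⋙ G : E ⥤ D (sending y to G(κ y)) are mutually quasi-inverse: (ι ⋙ F) ⋙ (κ ⋙ G) is naturally isomorphic to the identity functor of D and (κ ⋙ G) ⋙ (ι ⋙ F) is naturally isomorphic to the identity functor of E. In particular D and E are equivalent categories. -/
open CategoryTheory

/-- With `E` reflective in `C` (via `F ⊣ κ`, unit `η`) and `D` coreflective in `C`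
(via `ι ⊣ G`, counit `ψ`), and Conditions (i) and (ii), the composites `ι ⋙ F` and
`κ ⋙ G` are mutually quasi-inverse; in particular `D` and `E` are equivalent. -/
theorem stmt_1 {C D E : Type*} [Category C] [Category D] [Category E]
    (ι : D ⥤ C) (κ : E ⥤ C) [ι.Faithful] [κ.Faithful]
    (F : C ⥤ E) (adj : F ⊣ κ)
    (G : C ⥤ D) (adj' : ι ⊣ G)
    (cond₁ : ∀ (x z : D) (f : ι.obj z ⟶ κ.obj (F.obj (ι.obj x))),
      ∃! h : z ⟶ x, ι.map h ≫ adj.unit.app (ι.obj x) = f)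
    (cond₂ : ∀ (y w : E) (g : ι.obj (G.obj (κ.obj y)) ⟶ κ.obj w),
      ∃! k : y ⟶ w, adj'.counit.app (κ.obj y) ≫ κ.map k = g) :
    Nonempty ((ι ⋙ F) ⋙ (κ ⋙ G) ≅ 𝟭 D) ∧
      Nonempty ((κ ⋙ G) ⋙ (ι ⋙ F) ≅ 𝟭 E) ∧
      Nonempty (D ≌ E) := by
  -- key: ι ⋙ F is fully faithful
  have key₁ : ∀ {z x : D} (h : z ⟶ x),
      (adj.homEquiv (ι.obj z) (F.obj (ι.obj x))) (F.map (ι.map h))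
        = ι.map h ≫ adj.unit.app (ι.obj x) := by
    intro z x h
    simp [Adjunction.homEquiv_apply, ← adj.unit.naturality (ι.map h)]
  have ff₁ : (ι ⋙ F).FullyFaithful := by
    refine ⟨fun {z x} g => (cond₁ x z ((adj.homEquiv _ _) g)).choose, ?_, ?_⟩
    · intro z x g
      have := (cond₁ x z ((adj.homEquiv _ _) g)).choose_spec.1
      apply (adj.homEquiv _ _).injective
      exact (key₁ _).trans this
    · intro z x h
      have huniq := (cond₁ x z ((adj.homEquiv _ _) (F.map (ι.map h)))).choose_spec.2
      exact (huniq h (key₁ h).symm).symm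
  have key₂ : ∀ {y w : E} (k : y ⟶ w),
      (adj'.homEquiv (G.obj (κ.obj y)) (κ.obj w)).symm (G.map (κ.map k))
        = adj'.counit.app (κ.obj y) ≫ κ.map k := by
    intro y w k
    simp [Adjunction.homEquiv_symm_apply, adj'.counit.naturality (κ.map k)]
  have ff₂ : (κ ⋙ G).FullyFaithful := by
    refine ⟨fun {y w} g => (cond₂ y w ((adj'.homEquiv _ _).symm g)).choose, ?_, ?_⟩
    · intro y w g
      have := (cond₂ y w ((adj'.homEquiv _ _).symm g)).choose_spec.1
      apply (adj'.homEquiv _ _).symm.injective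
      exact (key₂ _).trans this
    · intro y w k
      have huniq := (cond₂ y w ((adj'.homEquiv _ _).symm (G.map (κ.map k)))).choose_spec.2
      exact (huniq k (key₂ k).symm).symm
  have h1 : (ι ⋙ F).Full := ff₁.full
  have h2 : (ι ⋙ F).Faithful := ff₁.faithful
  have h3 : (κ ⋙ G).Full := ff₂.full
  have h4 : (κ ⋙ G).Faithful := ff₂.faithful
  let adjc : (ι ⋙ F) ⊣ (κ ⋙ G) := adj'.comp adj
  have hu : IsIso adjc.unit := adjc.unit_isIso_of_L_fully_faithful
  have hc : IsIso adjc.counit := adjc.counit_isIso_of_R_fully_faithful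
  exact ⟨⟨(asIso adjc.unit).symm⟩, ⟨asIso adjc.counit⟩,
    ⟨CategoryTheory.Equivalence.mk (ι ⋙ F) (κ ⋙ G) (asIso adjc.unit) (asIso adjc.counit)⟩⟩
end

section
/- With the reflective setup and Condition (i), the composite functor ι ⋙ F : D ⥤ E (sending an object x of D to F(ι x) and a morphism h to F(ι h)) is full and faithful: for all objects x, y of D, every morphism g : F(ι x) ⟶ F(ι y) in E equals F(ι f) for a unique morphism f : x ⟶ y in D. -/
open CategoryTheory

/-- With the reflective setup (`F ⊣ κ`, unit `η`) and Condition (i), the composite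
`ι ⋙ F : D ⥤ E` is full and faithful: every `g : F(ι x) ⟶ F(ι y)` equals `F(ι f)`
for a unique `f : x ⟶ y` in `D`. -/
theorem stmt_3 {C D E : Type*} [Category C] [Category D] [Category E]
    (ι : D ⥤ C) (κ : E ⥤ C) [ι.Faithful] [κ.Faithful]
    (F : C ⥤ E) (adj : F ⊣ κ)
    (cond₁ : ∀ (x z : D) (f : ι.obj z ⟶ κ.obj (F.obj (ι.obj x))),
      ∃! h : z ⟶ x, ι.map h ≫ adj.unit.app (ι.obj x) = f) :
    ∀ (x y : D) (g : F.obj (ι.obj x) ⟶ F.obj (ι.obj y)),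
      ∃! f : x ⟶ y, F.map (ι.map f) = g := by
  intro x y g
  obtain ⟨h, hh, huniq⟩ := cond₁ y x (adj.unit.app (ι.obj x) ≫ κ.map g)
  have key : ∀ f : x ⟶ y, F.map (ι.map f) = g ↔
      ι.map f ≫ adj.unit.app (ι.obj y) = adj.unit.app (ι.obj x) ≫ κ.map g := by
    intro f
    rw [← (adj.homEquiv _ _).apply_eq_iff_eq]
    simp [Adjunction.homEquiv_unit]
  exact ⟨h, (key h).2 hh, fun f hf => huniq f ((key f).1 hf)⟩
end

section
/- With the reflective and coreflective setup and Condition (ii), and a fixed object a of D, the functor F̃ : a↓D ⥤ a↓E (defined on objects by F̃(x, f) = (F(ι x), η_{ι x} ∘ f) and on morphisms by F̃ h = F(ι h)) is essentially surjective: every object (y, g) of a↓E is isomorphic in a↓E to F̃(G(κ y), h), where h : a ⟶ G(κ y) is the unique morphism in D with ψ_{κ y} ∘ ι h = g. -/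
open CategoryTheory

/-- The functor `F̃ : a↓D ⥤ a↓E`, defined on objects by
`F̃(x, f) = (F(ι x), η_{ι x} ∘ f)` and on morphisms by `F̃ h = F(ι h)`. -/
def Ftilde {C D E : Type*} [Category C] [Category D] [Category E]
    (ι : D ⥤ C) (κ : E ⥤ C) (F : C ⥤ E) (adj : F ⊣ κ) (a : D) :
    StructuredArrow (ι.obj a) ι ⥤ StructuredArrow (ι.obj a) κ where
  obj p := StructuredArrow.mk (T := κ) (Y := F.obj (ι.obj p.right))
    (p.hom ≫ adj.unit.app (ι.obj p.right))
  map {p q} h := StructuredArrow.homMk (F.map (ι.map h.right)) (by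
    have nat := adj.unit.naturality (ι.map h.right)
    dsimp at nat ⊢
    rw [Category.assoc, ← nat, ← Category.assoc, StructuredArrow.w h])

/-- With the reflective and coreflective setup and Condition (ii), and a fixed object
`a` of `D`, the functor `F̃ : a↓D ⥤ a↓E` is essentially surjective: for every object
`(y, g)` of `a↓E` there is a unique `h : a ⟶ G(κ y)` in `D` with `ψ_{κ y} ∘ ι h = g`,
and `(y, g)` is isomorphic in `a↓E` to `F̃(G(κ y), h)`. -/
theorem stmt_5 {C D E : Type*} [Category C] [Category D] [Category E]
    (ι : D ⥤ C) (κ : E ⥤ C) [ι.Faithful] [κ.Faithful]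
    (F : C ⥤ E) (adj : F ⊣ κ)
    (G : C ⥤ D) (adj' : ι ⊣ G)
    (cond₂ : ∀ (y w : E) (g : ι.obj (G.obj (κ.obj y)) ⟶ κ.obj w),
      ∃! k : y ⟶ w, adj'.counit.app (κ.obj y) ≫ κ.map k = g)
    (a : D) :
    ∀ (y : E) (g : ι.obj a ⟶ κ.obj y),
      (∃! h : a ⟶ G.obj (κ.obj y),
        ι.map h ≫ adj'.counit.app (κ.obj y) = g) ∧
      (∀ h : a ⟶ G.obj (κ.obj y), ι.map h ≫ adj'.counit.app (κ.obj y) = g →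
        Nonempty (StructuredArrow.mk (T := κ) (Y := y) g ≅
          (Ftilde ι κ F adj a).obj
            (StructuredArrow.mk (T := ι) (Y := G.obj (κ.obj y)) (ι.map h)))) := by
  intro y g
  constructor
  · refine ⟨adj'.homEquiv a (κ.obj y) g, ?_, ?_⟩
    · show ι.map _ ≫ _ = g
      rw [← Adjunction.homEquiv_counit, Equiv.symm_apply_apply]
    · intro h hh
      apply (adj'.homEquiv a (κ.obj y)).symm.injective
      rw [Adjunction.homEquiv_counit, Equiv.symm_apply_apply]
      exact hh
  · intro h hh
    set x := ι.obj (G.obj (κ.obj y)) with hx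
    obtain ⟨k, hk, hkuniq⟩ := cond₂ y (F.obj x) (adj.unit.app x)
    set k' : F.obj x ⟶ y := (adj.homEquiv x y).symm (adj'.counit.app (κ.obj y)) with hk'
    have hk'eq : adj.unit.app x ≫ κ.map k' = adj'.counit.app (κ.obj y) := by
      have : adj.homEquiv x y k' = adj'.counit.app (κ.obj y) := by
        rw [hk']; exact Equiv.apply_symm_apply _ _
      rwa [Adjunction.homEquiv_unit] at this
    have h1 : k ≫ k' = 𝟙 y := by
      obtain ⟨m, hm, hmuniq⟩ := cond₂ y y (adj'.counit.app (κ.obj y))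
      rw [hmuniq (k ≫ k') (by
            show adj'.counit.app (κ.obj y) ≫ κ.map (k ≫ k') = _
            rw [κ.map_comp, ← Category.assoc, hk, hk'eq]),
        hmuniq (𝟙 y) (by simp)]
    have h2 : k' ≫ k = 𝟙 (F.obj x) := by
      apply (adj.homEquiv x (F.obj x)).injective
      rw [Adjunction.homEquiv_unit, Adjunction.homEquiv_unit]
      rw [κ.map_comp, ← Category.assoc, hk'eq, hk]
      simp
    refine ⟨StructuredArrow.isoMk ⟨k, k', h1, h2⟩ ?_⟩
    dsimp [Ftilde]
    rw [← hh, Category.assoc, hk]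
end
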